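/- For every α ∈ (0,1) and every integer k ≥ 0, the function f̃_k satisfies |f̃_k(x) − x^(1/p)| ≤ 2α for all x ∈ [0, α^p]. -/

import Mathlib

/-- `mu p t = ((t - t^p)/((p-1)(1-t)))^(1/p)`, the real positive `p`th root. -/
noncomputable def mu (p : ℕ) (t : ℝ) : ℝ :=
  ((t - t ^ p) / (((p : ℝ) - 1) * (1 - t))) ^ ((1 : ℝ) / p)

/-- The sequence `α_0 = α`, `α_{k+1} = p α_k / ((p-1) μ(α_k) + μ(α_k)^(1-p) α_k^p)`. -/
noncomputable def alphaSeq (p : ℕ) (α : ℝ) : ℕ → ℝ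
  | 0 => α
  | k + 1 =>
      (p : ℝ) * alphaSeq p α k /
        (((p : ℝ) - 1) * mu p (alphaSeq p α k) +
          alphaSeq p α k ^ p / mu p (alphaSeq p α k) ^ (p - 1))

/-- `f_0(x) = 1`, `f_{k+1}(x) = (1/p)((p-1) μ(α_k) f_k(x) + x/(μ(α_k)^(p-1) f_k(x)^(p-1)))`. -/
noncomputable def fSeq (p : ℕ) (α : ℝ) : ℕ → ℝ → ℝ
  | 0, _ => 1
  | k + 1, x =>
      (1 / (p : ℝ)) *
        (((p : ℝ) - 1) * mu p (alphaSeq p α k) * fSeq p α k x +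
          x / (mu p (alphaSeq p α k) ^ (p - 1) * fSeq p α k x ^ (p - 1)))

lemma mu_base_pos {p : ℕ} (hp : 2 ≤ p) {t : ℝ} (h0 : 0 < t) (h1 : t < 1) :
    0 < (t - t ^ p) / (((p : ℝ) - 1) * (1 - t)) := by
  apply div_pos
  · have h : t ^ p < t ^ 1 := pow_lt_pow_right_of_lt_one₀ h0 h1 (by omega)
    rw [pow_one] at h
    linarith
  · have h : (1:ℝ) < (p:ℝ) := by exact_mod_cast Nat.lt_of_lt_of_le one_lt_two hp
    have : (0:ℝ) < 1 - t := by linarith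
    nlinarith

lemma mu_pos {p : ℕ} (hp : 2 ≤ p) {t : ℝ} (h0 : 0 < t) (h1 : t < 1) : 0 < mu p t :=
  Real.rpow_pos_of_pos (mu_base_pos hp h0 h1) _

lemma mu_pow {p : ℕ} (hp : 2 ≤ p) {t : ℝ} (h0 : 0 < t) (h1 : t < 1) :
    mu p t ^ p = (t - t ^ p) / (((p : ℝ) - 1) * (1 - t)) := by
  have hb := (mu_base_pos hp h0 h1).le
  have hp0 : (p:ℝ) ≠ 0 := by positivity
  rw [mu, ← Real.rpow_natCast (_ ^ ((1:ℝ)/p)) p, ← Real.rpow_mul hb,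
    one_div_mul_cancel hp0, Real.rpow_one]

lemma lt_mu {p : ℕ} (hp : 2 ≤ p) {t : ℝ} (h0 : 0 < t) (h1 : t < 1) : t < mu p t := by
  have hm := mu_pos hp h0 h1
  refine lt_of_pow_lt_pow_left₀ p hm.le ?_
  rw [mu_pow hp h0 h1]
  obtain ⟨q, rfl⟩ : ∃ q, p = q + 1 := ⟨p - 1, by omega⟩
  have hq : 1 ≤ q := by omega
  have h1t : (0:ℝ) < 1 - t := by linarith
  have hcast : ((q:ℝ) + 1) - 1 = (q:ℝ) := by ring
  push_cast
  rw [hcast, lt_div_iff₀ (by positivity)]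
  have hgeom : (∑ i ∈ Finset.range q, t ^ i) * (1 - t) = 1 - t ^ q := by
    have := geom_sum_mul t q
    linarith [this]
  have hsum : (q:ℝ) * t ^ q < ∑ i ∈ Finset.range q, t ^ i := by
    have h2 : ∑ i ∈ Finset.range q, t ^ q < ∑ i ∈ Finset.range q, t ^ i := by
      apply Finset.sum_lt_sum
      · intro i hi
        exact pow_le_pow_of_le_one h0.le h1.le (Finset.mem_range.mp hi).le
      · refine ⟨0, Finset.mem_range.mpr (by omega), ?_⟩
        have h3 : t ^ q < t ^ 0 := pow_lt_pow_right_of_lt_one₀ h0 h1 (by omega)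
        simpa using h3
    simpa [Finset.sum_const, Finset.card_range] using h2
  have key : (q:ℝ) * t ^ q * (1 - t) < 1 - t ^ q := by
    rw [← hgeom]
    exact mul_lt_mul_of_pos_right hsum h1t
  have hexp : t - t ^ (q+1) = t * (1 - t ^ q) := by ring
  have hexp2 : t ^ (q+1) * ((q:ℝ) * (1-t)) = t * ((q:ℝ) * t^q * (1-t)) := by ring
  rw [hexp, hexp2]
  exact mul_lt_mul_of_pos_left key h0

/-- strict AM-GM style inequality: `(q+1) t m^q < q m^(q+1) + t^(q+1)` for `0 < t < m`. -/
lemma key_strict {q : ℕ} (hq : 1 ≤ q) {t m : ℝ} (h0 : 0 < t) (htm : t < m) :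
    ((q:ℝ)+1) * t * m ^ q < (q:ℝ) * m ^ (q+1) + t ^ (q+1) := by
  have hm0 : 0 < m := h0.trans htm
  have hA : (∑ i ∈ Finset.range (q+1), m ^ i * t ^ (q - i)) * (m - t)
      = m ^ (q+1) - t ^ (q+1) := by
    have := geom_sum₂_mul m t (q+1)
    simpa using this
  have hAle : (∑ i ∈ Finset.range (q+1), m ^ i * t ^ (q - i)) < ((q:ℝ)+1) * m ^ q := by
    have h2 : ∑ i ∈ Finset.range (q+1), m ^ i * t ^ (q - i)
        < ∑ _i ∈ Finset.range (q+1), m ^ q := by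
      apply Finset.sum_lt_sum
      · intro i hi
        have hiq : i ≤ q := Nat.lt_succ_iff.mp (Finset.mem_range.mp hi)
        calc m ^ i * t ^ (q - i) ≤ m ^ i * m ^ (q - i) := by
              apply mul_le_mul_of_nonneg_left (pow_le_pow_left₀ h0.le htm.le _) (by positivity)
          _ = m ^ q := by rw [← pow_add]; congr 1; omega
      · refine ⟨0, Finset.mem_range.mpr (by omega), ?_⟩
        simpa using pow_lt_pow_left₀ htm h0.le (by omega : q ≠ 0)
    simpa [Finset.sum_const, Finset.card_range] using h2
  have hmt : 0 < m - t := by linarith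
  nlinarith [mul_lt_mul_of_pos_right hAle hmt, pow_succ m q]

lemma invariant (q : ℕ) (hq1 : 1 ≤ q) (α : ℝ) (hα0 : 0 < α) (hα1 : α < 1) (k : ℕ) :
    (0 < alphaSeq (q+1) α k ∧ alphaSeq (q+1) α k < 1) ∧
    ∀ x : ℝ, 0 ≤ x → x ≤ α ^ (q+1) →
      0 < fSeq (q+1) α k x ∧ alphaSeq (q+1) α k * fSeq (q+1) α k x ≤ α ∧
        x ≤ α * (alphaSeq (q+1) α k * fSeq (q+1) α k x) ^ q := by
  have hp : 2 ≤ q + 1 := by omega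
  have hq0 : (0:ℝ) < (q:ℝ) := by exact_mod_cast hq1
  have hq10 : (0:ℝ) < (q:ℝ) + 1 := by positivity
  induction k with
  | zero =>
      refine ⟨⟨hα0, hα1⟩, fun x hx0 hx1 => ?_⟩
      refine ⟨by norm_num [fSeq], by simpa [fSeq, alphaSeq] using hα1.le, ?_⟩
      simp only [fSeq, alphaSeq, mul_one]
      calc x ≤ α ^ (q+1) := hx1
        _ = α * α ^ q := by ring
  | succ k ih =>
      obtain ⟨⟨ht0, ht1⟩, hfx⟩ := ih
      set t : ℝ := alphaSeq (q+1) α k with htdef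
      set m : ℝ := mu (q+1) t with hmdef
      have hm0 : 0 < m := mu_pos hp ht0 ht1
      have htm : t < m := lt_mu hp ht0 ht1
      set D : ℝ := (q:ℝ) * m + t ^ (q+1) / m ^ q with hDdef
      have hD0 : 0 < D := by positivity
      have halpha : alphaSeq (q+1) α (k+1) = ((q:ℝ)+1) * t / D := by
        rw [alphaSeq, ← htdef, ← hmdef, hDdef]
        push_cast
        ring_nf
      have ht'0 : 0 < alphaSeq (q+1) α (k+1) := by
        rw [halpha]; positivity
      have hDm : ((q:ℝ)+1) * t < D := by
        have hk := key_strict hq1 ht0 htm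
        have e : D * m ^ q = (q:ℝ) * m ^ (q+1) + t ^ (q+1) := by
          rw [hDdef, add_mul, div_mul_cancel₀ _ (by positivity : m ^ q ≠ 0)]
          ring
        have h0 : (((q:ℝ)+1) * t) * m ^ q < D * m ^ q := by rw [e]; exact hk
        exact lt_of_mul_lt_mul_right h0 (by positivity)
      have ht'1 : alphaSeq (q+1) α (k+1) < 1 := by
        rw [halpha, div_lt_one hD0]; exact hDm
      refine ⟨⟨ht'0, ht'1⟩, fun x hx0 hx1 => ?_⟩
      obtain ⟨hf0, h2, h3⟩ := hfx x hx0 hx1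
      set f : ℝ := fSeq (q+1) α k x with hfdef
      set Z : ℝ := (q:ℝ) * m * f + x / (m ^ q * f ^ q) with hZdef
      have hZ0 : 0 < Z := by positivity
      have hfeq : fSeq (q+1) α (k+1) x = (1/((q:ℝ)+1)) * Z := by
        rw [fSeq, ← htdef, ← hmdef, ← hfdef, hZdef]
        push_cast
        ring_nf
      have hf'0 : 0 < fSeq (q+1) α (k+1) x := by rw [hfeq]; positivity
      have hs' : alphaSeq (q+1) α (k+1) * fSeq (q+1) α (k+1) x = t * Z / D := by
        rw [halpha, hfeq]
        field_simp
      -- upper bound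
      have hxdiv : x / (m ^ q * f ^ q) ≤ α * t ^ q / m ^ q := by
        have h4 : x / (m ^ q * f ^ q) ≤ (α * (t*f) ^ q) / (m ^ q * f ^ q) := by gcongr
        calc x / (m ^ q * f ^ q) ≤ (α * (t*f) ^ q) / (m ^ q * f ^ q) := h4
          _ = α * t ^ q / m ^ q := by rw [mul_pow]; field_simp
      have hupper : t * Z ≤ α * D := by
        rw [hZdef, hDdef]
        calc t * ((q:ℝ)*m*f + x/(m^q*f^q)) = (q:ℝ)*m*(t*f) + t*(x/(m^q*f^q)) := by ring
          _ ≤ (q:ℝ)*m*α + t*(α*t^q/m^q) := by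
              apply add_le_add
              · exact mul_le_mul_of_nonneg_left h2 (by positivity)
              · exact mul_le_mul_of_nonneg_left hxdiv ht0.le
          _ = α*((q:ℝ)*m + t^(q+1)/m^q) := by field_simp; ring
      have hub : alphaSeq (q+1) α (k+1) * fSeq (q+1) α (k+1) x ≤ α := by
        rw [hs', div_le_iff₀ hD0]; exact hupper
      refine ⟨hf'0, hub, ?_⟩
      -- lower bound invariant
      rcases eq_or_lt_of_le hx0 with hx0' | hx0'
      · have hpos : 0 < α * (alphaSeq (q+1) α (k+1) * fSeq (q+1) α (k+1) x) ^ q :=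
          mul_pos hα0 (pow_pos (mul_pos ht'0 hf'0) q)
        linarith
      rcases le_total (α^(q+1) * (t^q)^(q+1)) (x * (m^q)^(q+1)) with hca | hcb
      · -- Case A
        have hxne : x ≠ 0 := ne_of_gt hx0'
        have hαne : α ≠ 0 := ne_of_gt hα0
        have htne : t ≠ 0 := ne_of_gt ht0
        have hmne : m ≠ 0 := ne_of_gt hm0
        have hfne : f ≠ 0 := ne_of_gt hf0
        set L : ℝ := (x/α) ^ ((1:ℝ)/q) with hLdef
        have hL0 : 0 < L := Real.rpow_pos_of_pos (div_pos hx0' hα0) _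
        have hLq : L ^ q = x / α := by
          rw [hLdef, ← Real.rpow_natCast ((x/α) ^ ((1:ℝ)/(q:ℝ))) q,
            ← Real.rpow_mul (div_nonneg hx0 hα0.le),
            one_div_mul_cancel (ne_of_gt hq0), Real.rpow_one]
        have hLα : L ≤ α := by
          apply le_of_pow_le_pow_left₀ (by omega : q ≠ 0) hα0.le
          rw [hLq, div_le_iff₀ hα0]
          calc x ≤ α^(q+1) := hx1
            _ = α^q * α := by ring
        have hLtf : L ≤ t * f := by
          apply le_of_pow_le_pow_left₀ (by omega : q ≠ 0) (by positivity)
          rw [hLq, div_le_iff₀ hα0]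
          calc x ≤ α * (t*f)^q := h3
            _ = (t*f)^q * α := by ring
        set l : ℝ := L / t with hldef
        have hl0 : 0 < l := div_pos hL0 ht0
        have hlne : l ≠ 0 := ne_of_gt hl0
        have hlf : l ≤ f := by
          rw [hldef, div_le_iff₀ ht0]
          calc L ≤ t * f := hLtf
            _ = f * t := by ring
        have hlq : l ^ q = x / (α * t^q) := by
          rw [hldef, div_pow, hLq, div_div]
        -- key power inequality : x ≤ (m*l)^(q+1)
        have hkey : x ≤ (m*l)^(q+1) := by
          apply le_of_pow_le_pow_left₀ (by omega : q ≠ 0) (by positivity)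
          have hd0 : (0:ℝ) < (α * t^q)^(q+1) := by positivity
          apply le_of_mul_le_mul_right _ hd0
          have h8 : ((m*l)^(q+1))^q * (α*t^q)^(q+1) = (m^q)^(q+1) * x^(q+1) := by
            rw [← pow_right_comm, mul_pow m l, hlq, mul_pow (m^q), mul_assoc,
              ← mul_pow (x/(α*t^q)), div_mul_cancel₀ x (by positivity : (α*t^q) ≠ 0)]
          rw [h8]
          have h5 := mul_le_mul_of_nonneg_left hca (pow_nonneg hx0 q)
          calc x^q * (α*t^q)^(q+1) = x^q * (α^(q+1) * (t^q)^(q+1)) := by rw [mul_pow]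
            _ ≤ x^q * (x * (m^q)^(q+1)) := h5
            _ = (m^q)^(q+1) * x^(q+1) := by ring
        have hxl : x ≤ m^(q+1) * l^q * f := by
          calc x ≤ (m*l)^(q+1) := hkey
            _ = m^(q+1) * l^q * l := by rw [mul_pow]; ring
            _ ≤ m^(q+1) * l^q * f := by
                apply mul_le_mul_of_nonneg_left hlf (by positivity)
        -- monotonicity
        obtain ⟨r, rfl⟩ : ∃ r, q = r + 1 := ⟨q - 1, by omega⟩
        have hmono : ((r:ℝ)+1)*m*l + x/(m^(r+1)*l^(r+1)) ≤ Z := by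
          have hdiff : x/(m^(r+1)*l^(r+1)) - x/(m^(r+1)*f^(r+1))
              = x*(f^(r+1) - l^(r+1))/(m^(r+1)*l^(r+1)*f^(r+1)) := by
            field_simp
          have hS : f^(r+1) - l^(r+1)
              = (∑ i ∈ Finset.range (r+1), f^i * l^(r-i)) * (f - l) := by
            have := geom_sum₂_mul f l (r+1)
            simp only [Nat.add_sub_cancel] at this
            exact this.symm
          have hSle : (∑ i ∈ Finset.range (r+1), f^i * l^(r-i)) ≤ ((r:ℝ)+1) * f^r := by
            calc (∑ i ∈ Finset.range (r+1), f^i * l^(r-i))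
                ≤ ∑ _i ∈ Finset.range (r+1), f^r := by
                  apply Finset.sum_le_sum
                  intro i hi
                  have hiq : i ≤ r := Nat.lt_succ_iff.mp (Finset.mem_range.mp hi)
                  calc f^i * l^(r-i) ≤ f^i * f^(r-i) := by
                        apply mul_le_mul_of_nonneg_left (pow_le_pow_left₀ hl0.le hlf _) (by positivity)
                    _ = f^r := by rw [← pow_add]; congr 1; omega
              _ = ((r:ℝ)+1)*f^r := by
                  rw [Finset.sum_const, Finset.card_range, nsmul_eq_mul]
                  push_cast
                  ring
          have hnum : x*(f^(r+1) - l^(r+1))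
              ≤ (((r:ℝ)+1)*m*(f-l)) * (m^(r+1)*l^(r+1)*f^(r+1)) := by
            rw [hS]
            have hfl : 0 ≤ f - l := by linarith
            calc x * ((∑ i ∈ Finset.range (r+1), f^i * l^(r-i)) * (f-l))
                ≤ (m^(r+1+1) * l^(r+1) * f) * ((((r:ℝ)+1) * f^r) * (f-l)) := by
                  apply mul_le_mul hxl
                  · apply mul_le_mul_of_nonneg_right hSle hfl
                  · positivity
                  · positivity
              _ = (((r:ℝ)+1)*m*(f-l)) * (m^(r+1)*l^(r+1)*f^(r+1)) := by ring
          have hquot : x*(f^(r+1) - l^(r+1))/(m^(r+1)*l^(r+1)*f^(r+1))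
              ≤ ((r:ℝ)+1)*m*(f-l) := by
            rw [div_le_iff₀ (by positivity)]
            exact hnum
          have hexp : ((r:ℝ)+1)*m*(f-l) = ((r:ℝ)+1)*m*f - ((r:ℝ)+1)*m*l := by ring
          rw [hZdef]
          push_cast
          linarith [hdiff, hquot]
        have hxlq : x/(m^(r+1)*l^(r+1)) = α*t^(r+1)/m^(r+1) := by
          rw [hlq]
          field_simp
        have hLD : L * D ≤ t * (((r:ℝ)+1)*m*l + x/(m^(r+1)*l^(r+1))) := by
          rw [hxlq, hDdef]
          have e : t * (((r:ℝ)+1)*m*l) = ((r:ℝ)+1)*m*L := by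
            rw [hldef]
            field_simp
          have h9 : L * (t^(r+1+1)/m^(r+1)) ≤ α * (t^(r+1+1)/m^(r+1)) :=
            mul_le_mul_of_nonneg_right hLα (by positivity)
          have e2 : t * (α*t^(r+1)/m^(r+1)) = α*(t^(r+1+1)/m^(r+1)) := by ring
          push_cast
          calc L*(((r:ℝ)+1)*m + t^(r+1+1)/m^(r+1))
              = ((r:ℝ)+1)*m*L + L*(t^(r+1+1)/m^(r+1)) := by ring
            _ ≤ ((r:ℝ)+1)*m*L + α*(t^(r+1+1)/m^(r+1)) := by linarith
            _ = t*(((r:ℝ)+1)*m*l) + t*(α*t^(r+1)/m^(r+1)) := by rw [e, e2]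
            _ = t*(((r:ℝ)+1)*m*l + α*t^(r+1)/m^(r+1)) := by ring
        have hLs : L ≤ t*Z/D := by
          rw [le_div_iff₀ hD0]
          calc L*D ≤ t*(((r:ℝ)+1)*m*l + x/(m^(r+1)*l^(r+1))) := hLD
            _ ≤ t*Z := mul_le_mul_of_nonneg_left hmono ht0.le
        rw [hs']
        calc x = α*(x/α) := by field_simp
          _ = α*L^(r+1) := by rw [hLq]
          _ ≤ α*(t*Z/D)^(r+1) :=
              mul_le_mul_of_nonneg_left (pow_le_pow_left₀ hL0.le hLs _) hα0.le
      · -- Case B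
        set X : ℝ := x ^ ((1:ℝ)/((q:ℝ)+1)) with hXdef
        have hX0 : 0 < X := Real.rpow_pos_of_pos hx0' _
        have hXq : X ^ (q+1) = x := by
          rw [hXdef, ← Real.rpow_natCast (x ^ ((1:ℝ)/((q:ℝ)+1))) (q+1),
            ← Real.rpow_mul hx0]
          push_cast
          rw [one_div_mul_cancel (ne_of_gt hq10), Real.rpow_one]
        have hA0 : (0:ℝ) ≤ m*f := by positivity
        have hamgm : ((q:ℝ)+1) * X ≤ Z := by
          have hw : (q:ℝ)/((q:ℝ)+1) + 1/((q:ℝ)+1) = 1 := by field_simp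
          have hB0 : (0:ℝ) ≤ x/((m*f)^q) := by positivity
          have h := Real.geom_mean_le_arith_mean2_weighted
            (by positivity) (by positivity) hA0 hB0 hw
          have e1 : ((m*f)^q : ℝ) ^ ((1:ℝ)/((q:ℝ)+1)) = (m*f) ^ ((q:ℝ)/((q:ℝ)+1)) := by
            rw [← Real.rpow_natCast (m*f) q, ← Real.rpow_mul hA0]
            congr 1
            ring
          have e2 : ((m*f)^q : ℝ) ^ ((1:ℝ)/((q:ℝ)+1)) * (x/((m*f)^q)) ^ ((1:ℝ)/((q:ℝ)+1)) = X := by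
            rw [← Real.mul_rpow (by positivity) hB0, hXdef]
            congr 1
            rw [mul_comm, div_mul_cancel₀ x (by positivity : ((m*f)^q : ℝ) ≠ 0)]
          rw [← e1, e2] at h
          have h10 := mul_le_mul_of_nonneg_left h hq10.le
          calc ((q:ℝ)+1) * X ≤ ((q:ℝ)+1)*((q:ℝ)/((q:ℝ)+1)*(m*f) + 1/((q:ℝ)+1)*(x/((m*f)^q))) := h10
            _ = (q:ℝ)*m*f + x/(m^q*f^q) := by
                rw [mul_pow]
                field_simp
            _ = Z := by rw [hZdef]
        have hDle : D ≤ ((q:ℝ)+1)*m := by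
          rw [hDdef]
          have h11 : t^(q+1)/m^q ≤ m := by
            rw [div_le_iff₀ (by positivity)]
            calc t^(q+1) ≤ m^(q+1) := pow_le_pow_left₀ ht0.le htm.le _
              _ = m * m^q := by ring
          linarith
        have hs'ge : t*X/m ≤ t*Z/D := by
          have h12 : t*(((q:ℝ)+1)*X) ≤ t*Z := mul_le_mul_of_nonneg_left hamgm ht0.le
          have h13 : (t*(((q:ℝ)+1)*X))/(((q:ℝ)+1)*m) ≤ (t*Z)/D :=
            div_le_div₀ (by positivity) h12 hD0 hDle
          calc t*X/m = (t*(((q:ℝ)+1)*X))/(((q:ℝ)+1)*m) := by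
                rw [div_eq_div_iff (by positivity) (by positivity)]
                ring
            _ ≤ t*Z/D := h13
        have hfinal1 : x ≤ α*(t*X/m)^q := by
          have h11 : x*m^q ≤ α*t^q*X^q := by
            apply le_of_pow_le_pow_left₀ (by omega : q+1 ≠ 0) (by positivity)
            have h12 := mul_le_mul_of_nonneg_right hcb (pow_nonneg hx0 q)
            calc (x*m^q)^(q+1) = (x*(m^q)^(q+1))*x^q := by rw [mul_pow]; ring
              _ ≤ (α^(q+1)*(t^q)^(q+1))*x^q := h12
              _ = (α*t^q*X^q)^(q+1) := by
                  rw [mul_pow, mul_pow α (t^q), pow_right_comm X, hXq]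
          have e3 : (t*X/m)^q = (t^q*X^q)/m^q := by
            rw [div_pow, mul_pow]
          rw [e3, mul_div_assoc', le_div_iff₀ (by positivity : (0:ℝ) < m^q)]
          calc x * m^q ≤ α*t^q*X^q := h11
            _ = α*(t^q*X^q) := by ring
        rw [hs']
        have hnn : (0:ℝ) ≤ t*X/m := by positivity
        calc x ≤ α*(t*X/m)^q := hfinal1
          _ ≤ α*(t*Z/D)^q :=
              mul_le_mul_of_nonneg_left (pow_le_pow_left₀ hnn hs'ge _) hα0.le


/-- The scaled iterate `f̃_k(x) = (2 α_k/(1+α_k)) f_k(x)`. -/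
noncomputable def ftilde (p : ℕ) (α : ℝ) (k : ℕ) (x : ℝ) : ℝ :=
  (2 * alphaSeq p α k / (1 + alphaSeq p α k)) * fSeq p α k x

/-- **Theorem 3.** For every `α ∈ (0,1)` and every `k ≥ 0`, the scaled iterate `f̃_k`
satisfies `|f̃_k(x) - x^(1/p)| ≤ 2α` for all `x ∈ [0, α^p]`. -/
theorem ftilde_error_near_origin (p : ℕ) (hp : 2 ≤ p)
    (α : ℝ) (hα : α ∈ Set.Ioo (0 : ℝ) 1) (k : ℕ) :
    ∀ x ∈ Set.Icc (0 : ℝ) (α ^ p),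
      |ftilde p α k x - x ^ ((1 : ℝ) / p)| ≤ 2 * α := by
  obtain ⟨hα0, hα1⟩ := hα
  obtain ⟨q, rfl⟩ : ∃ q, p = q + 1 := ⟨p - 1, by omega⟩
  intro x hx
  obtain ⟨hx0, hx1⟩ := hx
  obtain ⟨⟨ht0, ht1⟩, hf⟩ := invariant q (by omega) α hα0 hα1 k
  obtain ⟨hf0, h2, -⟩ := hf x hx0 hx1
  set t : ℝ := alphaSeq (q+1) α k with htdef
  set f : ℝ := fSeq (q+1) α k x with hfdef
  have h1t : (0:ℝ) < 1 + t := by linarith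
  have hftilde : ftilde (q+1) α k x = 2*(t*f)/(1+t) := by
    rw [ftilde, ← htdef, ← hfdef]
    ring
  have hft0 : 0 ≤ 2*(t*f)/(1+t) := by positivity
  have hftle : 2*(t*f)/(1+t) ≤ 2*α := by
    have h4 : 2*(t*f)/(1+t) ≤ 2*(t*f)/1 := by
      apply div_le_div_of_nonneg_left (by positivity) one_pos (by linarith)
    rw [div_one] at h4
    calc 2*(t*f)/(1+t) ≤ 2*(t*f) := h4
      _ ≤ 2*α := by linarith
  have hqc : ((q+1:ℕ):ℝ) ≠ 0 := by positivity
  have hxp : x ^ ((1:ℝ)/((q+1:ℕ):ℝ)) ≤ α := by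
    have h := Real.rpow_le_rpow hx0 hx1 (by positivity : (0:ℝ) ≤ (1:ℝ)/((q+1:ℕ):ℝ))
    calc x ^ ((1:ℝ)/((q+1:ℕ):ℝ)) ≤ (α^(q+1)) ^ ((1:ℝ)/((q+1:ℕ):ℝ)) := h
      _ = α := by
        rw [← Real.rpow_natCast α (q+1), ← Real.rpow_mul hα0.le,
          mul_one_div_cancel hqc, Real.rpow_one]
  have hxp0 : 0 ≤ x ^ ((1:ℝ)/((q+1:ℕ):ℝ)) := Real.rpow_nonneg hx0 _
  rw [hftilde, abs_le]
  constructor <;> linarith
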